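/- (Kernel of the adjoint at zero) Let A⁰ = [[0, w_p⁻¹],[P_p, −i a_p]] on L²_# × L²_# with P_p = −div(G_p∇), and let (A⁰)* = [[0, P_p],[w_p⁻¹, i a_p]] be its adjoint. Set b_p = w_p a_p and b_h = ∫_𝕋 b_p > 0. Then Ψ₀ = (1/b_h)(b_p, i) satisfies (A⁰)*Ψ₀ = 0, and ⟨Φ₀, Ψ₀⟩ = 1 where Φ₀ = (1, 0). Moreover every element of ker((A⁰)*) is a scalar multiple of (b_p, i). -/

import Mathlib

/-!
The first three claims are direct computations. For the kernel, the second row forces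
`f = -i w_p a_p g`, so everything reduces to showing that a periodic solution of
`div (G_p ∇g) = 0` is constant. Since `div (conj g · G_p ∇g) = conj ∇g · G_p ∇g`, and the
boundary terms of the divergence theorem cancel on a unit box by periodicity, the continuous
energy density `Re (conj ∇g · G_p ∇g) ≥ G_min |∇g|² ≥ 0` has zero integral over every unit box,
hence vanishes everywhere.
-/

open MeasureTheory Set Function ComplexConjugate

theorem Function.Periodic.fderiv {𝕜 E F : Type*} [NontriviallyNormedField 𝕜]
    [NormedAddCommGroup E] [NormedSpace 𝕜 E] [NormedAddCommGroup F] [NormedSpace 𝕜 F]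
    {f : E → F} {a : E} (hf : Periodic f a) : Periodic (fderiv 𝕜 f) a := fun x => by
  rw [← fderiv_comp_add_right, funext hf]

theorem fderiv_conj_mul_apply {E : Type*} [NormedAddCommGroup E] [NormedSpace ℝ E]
    {g F : E → ℂ} {x : E} (hg : DifferentiableAt ℝ g x) (hF : DifferentiableAt ℝ F x) (v : E) :
    fderiv ℝ (fun y => conj (g y) * F y) x v
      = conj (fderiv ℝ g x v) * F x + conj (g x) * fderiv ℝ F x v := by
  simp only [starRingEnd_apply]
  rw [fderiv_fun_mul hg.star hF]
  simp only [fderiv_star]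
  simp
  ring

theorem le_re_sum_conj_mul_sum {d : ℕ} {G : Fin d → Fin d → ℝ} {c : ℝ}
    (hG : ∀ ξ : Fin d → ℝ, c * ∑ i, ξ i ^ 2 ≤ ∑ i, ∑ j, G i j * ξ i * ξ j) (ξ : Fin d → ℂ) :
    c * ∑ i, ‖ξ i‖ ^ 2 ≤ (∑ i, conj (ξ i) * ∑ j, (G i j : ℂ) * ξ j).re := by
  have hre : (∑ i, conj (ξ i) * ∑ j, (G i j : ℂ) * ξ j).re
      = ∑ i, ∑ j, G i j * (ξ i).re * (ξ j).re + ∑ i, ∑ j, G i j * (ξ i).im * (ξ j).im := by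
    simp only [Complex.re_sum, Finset.mul_sum, ← Finset.sum_add_distrib]
    refine Finset.sum_congr rfl fun i _ => Finset.sum_congr rfl fun j _ => ?_
    simp only [Complex.mul_re, Complex.conj_re, Complex.conj_im, Complex.ofReal_re,
      Complex.ofReal_im, Complex.mul_im]
    ring
  have hnorm : ∑ i, ‖ξ i‖ ^ 2 = ∑ i, (ξ i).re ^ 2 + ∑ i, (ξ i).im ^ 2 := by
    rw [← Finset.sum_add_distrib]
    refine Finset.sum_congr rfl fun i _ => ?_
    rw [Complex.sq_norm, Complex.normSq_apply]
    ring
  rw [hre, hnorm, mul_add]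
  exact add_le_add (hG fun i => (ξ i).re) (hG fun i => (ξ i).im)

theorem eq_zero_of_setIntegral_eq_zero_of_nonneg {X : Type*} [TopologicalSpace X]
    [MeasurableSpace X] {μ : Measure X} [μ.IsOpenPosMeasure] {f : X → ℝ} {s : Set X} {z : X}
    (hf : ContinuousOn f s) (hf0 : 0 ≤ᵐ[μ.restrict s] f) (hfi : IntegrableOn f s μ)
    (hint : ∫ x in s, f x ∂μ = 0) (hz : z ∈ interior s) : f z = 0 := by
  have hae := (setIntegral_eq_zero_iff_of_nonneg_ae hf0 hfi).1 hint
  exact Measure.eqOn_open_of_ae_eq (ae_restrict_of_ae_restrict_of_subset interior_subset hae)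
    isOpen_interior (hf.mono interior_subset) continuousOn_const hz

theorem integral_divergence_eq_zero_of_periodic {E : Type*} [NormedAddCommGroup E]
    [NormedSpace ℝ E] [CompleteSpace E] {d : ℕ} {V : Fin d → (Fin d → ℝ) → E}
    (hV : ∀ i, ContDiff ℝ 1 (V i)) (hper : ∀ i, Periodic (V i) (Pi.single i 1))
    (a : Fin d → ℝ) :
    ∫ x in Icc a (a + 1), ∑ i, fderiv ℝ (V i) x (Pi.single i 1) = 0 := by
  cases d with
  | zero => simp
  | succ n =>
    have hcont : Continuous fun x => ∑ i, fderiv ℝ (V i) x (Pi.single i 1) :=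
      continuous_finsetSum _ fun i _ =>
        ((hV i).continuous_fderiv one_ne_zero).clm_apply continuous_const
    rw [integral_divergence_of_hasFDerivAt_off_countable' a (a + 1)
      (fun i => by simp) V (fun i x => fderiv ℝ (V i) x) ∅ countable_empty
      (fun i => (hV i).continuous.continuousOn)
      (fun x _ i => ((hV i).differentiable one_ne_zero x).hasFDerivAt)
      (hcont.continuousOn.integrableOn_compact isCompact_Icc)]
    refine Finset.sum_eq_zero fun i _ => ?_
    have hface : ∀ w : Fin n → ℝ, (Fin.insertNth i ((a + 1) i) w : Fin (n + 1) → ℝ)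
        = Fin.insertNth i (a i) w + Pi.single i 1 := by
      intro w
      ext j
      exact Fin.succAboveCases i (by simp) (fun k => by simp) j
    have hperi : ∀ x, V i (x + Pi.single i 1) = V i x := hper i
    simp only [hface, hperi, sub_self]

theorem integral_conj_fderiv_mul_eq_zero_of_periodic {d : ℕ} {g : (Fin d → ℝ) → ℂ}
    {F : Fin d → (Fin d → ℝ) → ℂ} (hg : ContDiff ℝ 1 g) (hF : ∀ i, ContDiff ℝ 1 (F i))
    (hgper : ∀ i, Periodic g (Pi.single i 1)) (hFper : ∀ i, Periodic (F i) (Pi.single i 1))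
    (hdiv : ∀ x, ∑ i, fderiv ℝ (F i) x (Pi.single i 1) = 0) (a : Fin d → ℝ) :
    ∫ x in Icc a (a + 1), ∑ i, conj (fderiv ℝ g x (Pi.single i 1)) * F i x = 0 := by
  have hV : ∀ i, ContDiff ℝ 1 fun x => conj (g x) * F i x := fun i =>
    (Complex.conjCLE.contDiff.comp hg).mul (hF i)
  have hVper : ∀ i, Periodic (fun x => conj (g x) * F i x) (Pi.single i 1) := fun i x => by
    simp only [hgper i x, hFper i x]
  have hdivV : ∀ x, ∑ i, fderiv ℝ (fun y => conj (g y) * F i y) x (Pi.single i 1)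
      = ∑ i, conj (fderiv ℝ g x (Pi.single i 1)) * F i x := fun x => by
    simp only [fderiv_conj_mul_apply (hg.differentiable one_ne_zero x)
      ((hF _).differentiable one_ne_zero x), Finset.sum_add_distrib, ← Finset.mul_sum, hdiv,
      mul_zero, add_zero]
  simpa only [hdivV] using integral_divergence_eq_zero_of_periodic hV hVper a

theorem fderiv_apply_single_eq_zero_of_periodic_of_div_grad_eq_zero {d : ℕ}
    {G : (Fin d → ℝ) → Fin d → Fin d → ℝ} {c : ℝ} (hc : 0 < c)
    (hGper : ∀ i, Periodic G (Pi.single i 1))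
    (hGell : ∀ x (ξ : Fin d → ℝ), c * ∑ i, ξ i ^ 2 ≤ ∑ i, ∑ j, G x i j * ξ i * ξ j)
    (hG : ContDiff ℝ 1 G) {g : (Fin d → ℝ) → ℂ} (hgper : ∀ i, Periodic g (Pi.single i 1))
    (hg : ContDiff ℝ 2 g)
    (hdiv : ∀ x, ∑ j, fderiv ℝ (fun y => ∑ k, (G y j k : ℂ) * fderiv ℝ g y (Pi.single k 1)) x
      (Pi.single j 1) = 0)
    (z : Fin d → ℝ) (i : Fin d) : fderiv ℝ g z (Pi.single i 1) = 0 := by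
  set F : Fin d → (Fin d → ℝ) → ℂ :=
    fun j y => ∑ k, (G y j k : ℂ) * fderiv ℝ g y (Pi.single k 1) with hF_def
  have hDg : ContDiff ℝ 1 (fderiv ℝ g) := hg.fderiv_right (by norm_num)
  have hF : ∀ j, ContDiff ℝ 1 (F j) := fun j => ContDiff.sum fun k _ =>
    (Complex.ofRealCLM.contDiff.comp (contDiff_pi.1 (contDiff_pi.1 hG j) k)).mul
      (hDg.clm_apply contDiff_const)
  have hFper : ∀ j, Periodic (F j) (Pi.single j 1) := fun j y => by
    simp only [hF_def, hGper j y, (hgper j).fderiv y]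
  set P : (Fin d → ℝ) → ℂ := fun y => ∑ i, conj (fderiv ℝ g y (Pi.single i 1)) * F i y
  have hP : Continuous P := continuous_finsetSum _ fun i _ =>
    (Complex.continuous_conj.comp (hDg.continuous.clm_apply continuous_const)).mul
      (hF i).continuous
  have hre_ge : ∀ y, c * ∑ i, ‖fderiv ℝ g y (Pi.single i 1)‖ ^ 2 ≤ (P y).re := fun y =>
    le_re_sum_conj_mul_sum (hGell y) _
  have hre_nonneg : ∀ y, 0 ≤ (P y).re := fun y =>
    (mul_nonneg hc.le (by positivity)).trans (hre_ge y)
  set a : Fin d → ℝ := z - fun _ => 1 / 2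
  have hre_integral : ∫ y in Icc a (a + 1), (P y).re = 0 := by
    have h := integral_re (μ := volume.restrict (Icc a (a + 1)))
      (hP.continuousOn.integrableOn_compact isCompact_Icc)
    rw [integral_conj_fderiv_mul_eq_zero_of_periodic (hg.of_le (by norm_num)) hF hgper hFper
      hdiv a] at h
    simpa using h
  have hz : z ∈ interior (Icc a (a + 1)) :=
    mem_interior_iff_mem_nhds.2 <|
      pi_Icc_mem_nhds (fun i => by simp [a]) (fun i => by simp [a]; linarith)
  have hre_cont : Continuous fun y => (P y).re := Complex.continuous_re.comp hP
  have hre_z : (P z).re = 0 := eq_zero_of_setIntegral_eq_zero_of_nonneg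
    (f := fun y => (P y).re) hre_cont.continuousOn (ae_of_all _ hre_nonneg)
    (hre_cont.continuousOn.integrableOn_compact isCompact_Icc) hre_integral hz
  have hsum : ∑ i, ‖fderiv ℝ g z (Pi.single i 1)‖ ^ 2 = 0 :=
    le_antisymm (nonpos_of_mul_nonpos_right (hre_z ▸ hre_ge z) hc) (by positivity)
  simpa using (Finset.sum_eq_zero_iff_of_nonneg (fun i _ => by positivity)).1 hsum i
    (Finset.mem_univ i)

theorem periodic_single_of_forall_intCast {α : Type*} {d : ℕ} {f : (Fin d → ℝ) → α}
    (hf : ∀ (x : Fin d → ℝ) (n : Fin d → ℤ), f (x + fun i => (n i : ℝ)) = f x) (i : Fin d) :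
    Periodic f (Pi.single i 1) := fun x => by
  have hcast : (fun j => ((Pi.single i 1 : Fin d → ℤ) j : ℝ)) = Pi.single i 1 := by
    ext j
    by_cases h : j = i <;> simp [h]
  simpa only [hcast] using hf x (Pi.single i 1)

theorem eq_of_periodic_of_div_grad_eq_zero {d : ℕ}
    {G : (Fin d → ℝ) → Fin d → Fin d → ℝ} {c : ℝ} (hc : 0 < c)
    (hGper : ∀ (x : Fin d → ℝ) (n : Fin d → ℤ), G (x + fun i => (n i : ℝ)) = G x)
    (hGell : ∀ x (ξ : Fin d → ℝ), c * ∑ i, ξ i ^ 2 ≤ ∑ i, ∑ j, G x i j * ξ i * ξ j)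
    (hG : ContDiff ℝ 1 G) {g : (Fin d → ℝ) → ℂ}
    (hgper : ∀ (x : Fin d → ℝ) (n : Fin d → ℤ), g (x + fun i => (n i : ℝ)) = g x)
    (hg : ContDiff ℝ 2 g)
    (hdiv : ∀ x, ∑ j, fderiv ℝ (fun y => ∑ k, (G y j k : ℂ) * fderiv ℝ g y (Pi.single k 1)) x
      (Pi.single j 1) = 0)
    (x y : Fin d → ℝ) : g x = g y := by
  refine is_const_of_fderiv_eq_zero (hg.differentiable (by norm_num)) (fun z => ?_) x y
  refine ContinuousLinearMap.coe_injective ((Pi.basisFun ℝ (Fin d)).ext fun i => ?_)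
  simpa using fderiv_apply_single_eq_zero_of_periodic_of_div_grad_eq_zero hc
    (periodic_single_of_forall_intCast hGper) hGell hG (periodic_single_of_forall_intCast hgper)
    hg hdiv z i

theorem stmt16_general (d : ℕ)
    (Gp : (Fin d → ℝ) → Fin d → Fin d → ℝ) (wp ap : (Fin d → ℝ) → ℝ)
    (Gmin wmin : ℝ) (hGmin : 0 < Gmin) (hwmin : 0 < wmin)
    (hGper : ∀ (x : Fin d → ℝ) (n : Fin d → ℤ), Gp (x + fun i => (n i : ℝ)) = Gp x)
    (hGell : ∀ (x ξ : Fin d → ℝ),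
      Gmin * (∑ i, ξ i ^ 2) ≤ ∑ i, ∑ j, Gp x i j * ξ i * ξ j)
    (hGsmooth : ContDiff ℝ 1 Gp)
    (hw : ∀ x, wmin ≤ wp x)
    (bh : ℝ)
    (hbh : bh = ∫ x in Set.univ.pi fun _ : Fin d => Set.Ioc (-(1/2) : ℝ) (1/2),
      wp x * ap x)
    (hbhpos : 0 < bh) :
    -- (A⁰)*Ψ₀ = 0 for Ψ₀ = (1/b_h)(b_p, i):
    ((∀ x : Fin d → ℝ,
        (∑ j, fderiv ℝ
          (fun y => ∑ k, ((Gp y j k : ℝ) : ℂ) *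
            fderiv ℝ (fun _ : Fin d → ℝ => Complex.I / (bh : ℂ)) y (Pi.single k 1))
          x (Pi.single j 1)) = 0) ∧
      (∀ x : Fin d → ℝ,
        ((wp x : ℝ) : ℂ)⁻¹ * (((wp x * ap x : ℝ) : ℂ) / (bh : ℂ))
          + Complex.I * ((ap x : ℝ) : ℂ) * (Complex.I / (bh : ℂ)) = 0)) ∧
    -- ⟨Φ₀, Ψ₀⟩ = 1:
    ((∫ x in Set.univ.pi fun _ : Fin d => Set.Ioc (-(1/2) : ℝ) (1/2),
        (1 : ℂ) * (starRingEnd ℂ) (((wp x * ap x : ℝ) : ℂ) / (bh : ℂ))) = 1) ∧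
    -- every element of ker (A⁰)* is a scalar multiple of (b_p, i):
    (∀ f g : (Fin d → ℝ) → ℂ,
      (∀ (x : Fin d → ℝ) (n : Fin d → ℤ), f (x + fun i => (n i : ℝ)) = f x) →
      (∀ (x : Fin d → ℝ) (n : Fin d → ℤ), g (x + fun i => (n i : ℝ)) = g x) →
      Continuous f → ContDiff ℝ 2 g →
      (∀ x, (∑ j, fderiv ℝ
          (fun y => ∑ k, ((Gp y j k : ℝ) : ℂ) * fderiv ℝ g y (Pi.single k 1))
          x (Pi.single j 1)) = 0) →
      (∀ x, ((wp x : ℝ) : ℂ)⁻¹ * f x + Complex.I * ((ap x : ℝ) : ℂ) * g x = 0) →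
      ∃ c : ℂ, (∀ x, f x = c * ((wp x * ap x : ℝ) : ℂ)) ∧ (∀ x, g x = c * Complex.I)) := by
  have hbh0 : (bh : ℂ) ≠ 0 := Complex.ofReal_ne_zero.2 hbhpos.ne'
  have hw0 : ∀ x, (wp x : ℂ) ≠ 0 := fun x => Complex.ofReal_ne_zero.2 (hwmin.trans_le (hw x)).ne'
  refine ⟨⟨fun x => by simp, fun x => ?_⟩, ?_, ?_⟩
  · push_cast
    field_simp [hw0 x]
    linear_combination (ap x : ℂ) * Complex.I_mul_I
  · simp only [one_mul, map_div₀, Complex.conj_ofReal]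
    rw [integral_div, integral_complex_ofReal, ← hbh, div_self hbh0]
  · intro f g _ hgper _ hg hdiv hker
    have hg0 : ∀ x, g x = g 0 := fun x =>
      eq_of_periodic_of_div_grad_eq_zero hGmin hGper hGell hGsmooth hgper hg hdiv x 0
    refine ⟨-Complex.I * g 0, fun x => ?_, fun x => ?_⟩
    · have h := hker x
      rw [hg0 x] at h
      push_cast
      field_simp [hw0 x] at h
      linear_combination h
    · rw [hg0 x]
      linear_combination g 0 * Complex.I_mul_I

/-- Kernel of the adjoint at zero. For `A⁰ = [[0, w_p⁻¹],[P_p, -i a_p]]` with adjoint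
`(A⁰)* = [[0, P_p],[w_p⁻¹, i a_p]]` on periodic functions, set `b_p = w_p a_p` and
`b_h = ∫_𝕋 b_p > 0`.  Then `Ψ₀ = (1/b_h)(b_p, i)` satisfies `(A⁰)*Ψ₀ = 0`,
`⟨Φ₀, Ψ₀⟩ = 1` for `Φ₀ = (1,0)`, and every `(f,g)` in the kernel of `(A⁰)*`
(i.e. `P_p g = 0` and `w_p⁻¹ f + i a_p g = 0`) is a scalar multiple of `(b_p, i)`. -/
theorem stmt16 (d : ℕ)
    (Gp : (Fin d → ℝ) → Fin d → Fin d → ℝ) (wp ap : (Fin d → ℝ) → ℝ)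
    (Gmin wmin : ℝ) (hGmin : 0 < Gmin) (hwmin : 0 < wmin)
    (hGper : ∀ (x : Fin d → ℝ) (n : Fin d → ℤ), Gp (x + fun i => (n i : ℝ)) = Gp x)
    (hwper : ∀ (x : Fin d → ℝ) (n : Fin d → ℤ), wp (x + fun i => (n i : ℝ)) = wp x)
    (haper : ∀ (x : Fin d → ℝ) (n : Fin d → ℤ), ap (x + fun i => (n i : ℝ)) = ap x)
    (hGsym : ∀ x i j, Gp x i j = Gp x j i)
    (hGell : ∀ (x ξ : Fin d → ℝ),
      Gmin * (∑ i, ξ i ^ 2) ≤ ∑ i, ∑ j, Gp x i j * ξ i * ξ j)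
    (hGsmooth : ContDiff ℝ 1 Gp)
    (hw : ∀ x, wmin ≤ wp x) (hwC : Continuous wp)
    (ha0 : ∀ x, 0 ≤ ap x) (haC : Continuous ap) (hane : ∃ x, ap x ≠ 0)
    (bh : ℝ)
    (hbh : bh = ∫ x in Set.univ.pi fun _ : Fin d => Set.Ioc (-(1/2) : ℝ) (1/2),
      wp x * ap x)
    (hbhpos : 0 < bh) :
    -- (A⁰)*Ψ₀ = 0 for Ψ₀ = (1/b_h)(b_p, i):
    ((∀ x : Fin d → ℝ,
        (∑ j, fderiv ℝ
          (fun y => ∑ k, ((Gp y j k : ℝ) : ℂ) *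
            fderiv ℝ (fun _ : Fin d → ℝ => Complex.I / (bh : ℂ)) y (Pi.single k 1))
          x (Pi.single j 1)) = 0) ∧
      (∀ x : Fin d → ℝ,
        ((wp x : ℝ) : ℂ)⁻¹ * (((wp x * ap x : ℝ) : ℂ) / (bh : ℂ))
          + Complex.I * ((ap x : ℝ) : ℂ) * (Complex.I / (bh : ℂ)) = 0)) ∧
    -- ⟨Φ₀, Ψ₀⟩ = 1:
    ((∫ x in Set.univ.pi fun _ : Fin d => Set.Ioc (-(1/2) : ℝ) (1/2),
        (1 : ℂ) * (starRingEnd ℂ) (((wp x * ap x : ℝ) : ℂ) / (bh : ℂ))) = 1) ∧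
    -- every element of ker (A⁰)* is a scalar multiple of (b_p, i):
    (∀ f g : (Fin d → ℝ) → ℂ,
      (∀ (x : Fin d → ℝ) (n : Fin d → ℤ), f (x + fun i => (n i : ℝ)) = f x) →
      (∀ (x : Fin d → ℝ) (n : Fin d → ℤ), g (x + fun i => (n i : ℝ)) = g x) →
      Continuous f → ContDiff ℝ 2 g →
      (∀ x, (∑ j, fderiv ℝ
          (fun y => ∑ k, ((Gp y j k : ℝ) : ℂ) * fderiv ℝ g y (Pi.single k 1))
          x (Pi.single j 1)) = 0) →
      (∀ x, ((wp x : ℝ) : ℂ)⁻¹ * f x + Complex.I * ((ap x : ℝ) : ℂ) * g x = 0) →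
      ∃ c : ℂ, (∀ x, f x = c * ((wp x * ap x : ℝ) : ℂ)) ∧ (∀ x, g x = c * Complex.I)) :=
  stmt16_general d Gp wp ap Gmin wmin hGmin hwmin hGper hGell hGsmooth hw bh hbh hbhpos
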